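/- Let α > -1, 0 < q ≤ v < ∞, β > -1, and suppose (α+1)/q = (β+1)/v. If h : (0,∞) → [0,∞) is decreasing and for all γ ∈ (0,1] satisfies h(σ/γ) ≤ h(σ) for all σ > 0, and ∫_0^∞ h(σ)^q dμ_α(σ) < ∞, then ∫_0^∞ h(σ)^v dμ_β(σ) < ∞. -/

import Mathlib

/-!
Write `μ_α` for the measure with density `gammaDensity α` on `(0, ∞)`. Since `h` is decreasing,
`h(σ)^q μ_α(0, σ] ≤ ∫ h^q dμ_α < ∞`, and `μ_α(0, σ] ≥ c σ^{α+1}` for `σ ≤ 1`; hence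
`h(σ)^q σ^{α+1} ≤ K` on `(0, 1]`. Splitting `h^v = h^q h^{v-q}` and using
`(α+1)(v-q)/q = β - α` gives `h^v σ^β ≤ K^{(v-q)/q} h^q σ^α` there, so `h^v dμ_β ≲ h^q dμ_α`
on `(0, 1]`. On `(1, ∞)` we have `h ≤ h(1)`, and `μ_β` is finite.
-/

open MeasureTheory Set Real

lemma mul_setLIntegral_Ioc_le_of_antitoneOn {μ : Measure ℝ} {F g : ℝ → ENNReal}
    (hF : AntitoneOn F (Ioi 0)) {σ : ℝ} (hσ : 0 < σ) :
    F σ * ∫⁻ t in Ioc 0 σ, g t ∂μ ≤ ∫⁻ t in Ioi 0, F t * g t ∂μ :=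
  calc F σ * ∫⁻ t in Ioc 0 σ, g t ∂μ ≤ ∫⁻ t in Ioc 0 σ, F σ * g t ∂μ :=
        lintegral_const_mul_le _ _
    _ ≤ ∫⁻ t in Ioc 0 σ, F t * g t ∂μ :=
        setLIntegral_mono' measurableSet_Ioc fun t ht ↦ by gcongr; exact hF ht.1 hσ ht.2
    _ ≤ ∫⁻ t in Ioi 0, F t * g t ∂μ := lintegral_mono_set Ioc_subset_Ioi_self

lemma setLIntegral_ofReal_le_mul {X : Type*} [MeasurableSpace X] {μ : Measure X} {s t : Set X}
    (hs : MeasurableSet s) (hst : s ⊆ t) {f g : X → ℝ} {C : ℝ} (hC : 0 ≤ C)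
    (hfg : ∀ x ∈ s, f x ≤ C * g x) :
    ∫⁻ x in s, ENNReal.ofReal (f x) ∂μ ≤ ENNReal.ofReal C * ∫⁻ x in t, ENNReal.ofReal (g x) ∂μ :=
  calc ∫⁻ x in s, ENNReal.ofReal (f x) ∂μ
        ≤ ∫⁻ x in s, ENNReal.ofReal C * ENNReal.ofReal (g x) ∂μ :=
        setLIntegral_mono' hs fun x hx ↦ by
          rw [← ENNReal.ofReal_mul hC]; exact ENNReal.ofReal_le_ofReal (hfg x hx)
    _ = ENNReal.ofReal C * ∫⁻ x in s, ENNReal.ofReal (g x) ∂μ :=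
        lintegral_const_mul' _ _ ENNReal.ofReal_ne_top
    _ ≤ ENNReal.ofReal C * ∫⁻ x in t, ENNReal.ofReal (g x) ∂μ := by gcongr

lemma lintegral_Ioc_rpow {r σ : ℝ} (hr : -1 < r) (hσ : 0 ≤ σ) :
    ∫⁻ t in Ioc 0 σ, ENNReal.ofReal (t ^ r) = ENNReal.ofReal (σ ^ (r + 1) / (r + 1)) := by
  have hint : IntegrableOn (fun t ↦ t ^ r) (Ioc 0 σ) :=
    (intervalIntegrable_iff_integrableOn_Ioc_of_le hσ).1
      (intervalIntegral.intervalIntegrable_rpow' hr)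
  rw [← ofReal_integral_eq_lintegral_ofReal hint
      (ae_restrict_of_forall_mem measurableSet_Ioc fun t ht ↦ rpow_nonneg ht.1.le r),
    ← intervalIntegral.integral_of_le hσ, integral_rpow (Or.inl hr),
    zero_rpow (by linarith), sub_zero]

lemma rpow_mul_rpow_le_of_rpow_mul_le {a s q v K : ℝ} (ha : 0 ≤ a) (hs : 0 ≤ s) (hq : 0 < q)
    (hqv : q ≤ v) (h : a ^ q * s ≤ K) :
    a ^ v * s ^ ((v - q) / q) ≤ K ^ ((v - q) / q) * a ^ q := by
  have haq : 0 ≤ a ^ q := rpow_nonneg ha q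
  calc a ^ v * s ^ ((v - q) / q) = a ^ q * (a ^ q * s) ^ ((v - q) / q) := by
        rw [mul_rpow haq hs, ← rpow_mul ha, mul_div_cancel₀ _ hq.ne', ← mul_assoc,
          ← rpow_add' ha (by linarith), add_sub_cancel]
    _ ≤ a ^ q * K ^ ((v - q) / q) := by gcongr
    _ = K ^ ((v - q) / q) * a ^ q := mul_comm _ _

noncomputable def gammaDensityConst (α : ℝ) : ℝ :=
  2 ^ (α + 1) / Real.Gamma (α + 1)

noncomputable def gammaDensity (α σ : ℝ) : ℝ :=
  gammaDensityConst α * σ ^ α * Real.exp (-2 * σ)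

lemma gammaDensityConst_pos {α : ℝ} (hα : -1 < α) : 0 < gammaDensityConst α :=
  div_pos (rpow_pos_of_pos two_pos _) (Gamma_pos_of_pos (by linarith))

lemma gammaDensity_nonneg {α σ : ℝ} (hα : -1 < α) (hσ : 0 ≤ σ) : 0 ≤ gammaDensity α σ := by
  have := gammaDensityConst_pos hα
  unfold gammaDensity
  positivity

lemma lintegral_gammaDensity_lt_top {α : ℝ} (hα : -1 < α) :
    ∫⁻ σ in Ioi 0, ENNReal.ofReal (gammaDensity α σ) < ⊤ := by
  have hint := (integrableOn_rpow_mul_exp_neg_mul_rpow hα one_pos two_pos).const_mul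
    (gammaDensityConst α)
  simp only [rpow_one] at hint
  simpa only [gammaDensity, mul_assoc] using hint.lintegral_lt_top

lemma ofReal_le_setLIntegral_Ioc_gammaDensity {α σ : ℝ} (hα : -1 < α) (hσ₀ : 0 ≤ σ)
    (hσ₁ : σ ≤ 1) :
    ENNReal.ofReal (gammaDensityConst α * exp (-2) * (σ ^ (α + 1) / (α + 1))) ≤
      ∫⁻ t in Ioc 0 σ, ENNReal.ofReal (gammaDensity α t) := by
  have := gammaDensityConst_pos hα
  rw [ENNReal.ofReal_mul (by positivity), ← lintegral_Ioc_rpow hα hσ₀,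
    ← lintegral_const_mul' _ _ ENNReal.ofReal_ne_top]
  refine setLIntegral_mono' measurableSet_Ioc fun t ⟨ht₀, htσ⟩ ↦ ?_
  rw [← ENNReal.ofReal_mul (by positivity)]
  have hexp : exp (-2) ≤ exp (-2 * t) := exp_le_exp.2 (by linarith)
  have ht : 0 ≤ t ^ α := rpow_nonneg ht₀.le α
  refine ENNReal.ofReal_le_ofReal ?_
  calc gammaDensityConst α * exp (-2) * t ^ α
      ≤ gammaDensityConst α * exp (-2 * t) * t ^ α := by gcongr
    _ = gammaDensity α t := by unfold gammaDensity; ring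

lemma exists_rpow_mul_rpow_le_of_antitoneOn {α q : ℝ} {h : ℝ → ℝ} (hα : -1 < α) (hq : 0 ≤ q)
    (hmono : AntitoneOn h (Ioi 0)) (hpos : ∀ σ, 0 ≤ h σ)
    (hfin : ∫⁻ σ in Ioi 0, ENNReal.ofReal (h σ ^ q * gammaDensity α σ) ≠ ⊤) :
    ∃ K ≥ 0, ∀ σ ∈ Ioc (0 : ℝ) 1, h σ ^ q * σ ^ (α + 1) ≤ K := by
  have := gammaDensityConst_pos hα
  have hα₁ : 0 < α + 1 := by linarith
  have hanti : AntitoneOn (fun t ↦ ENNReal.ofReal (h t ^ q)) (Ioi 0) :=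
    fun a ha b hb hab ↦ ENNReal.ofReal_le_ofReal (rpow_le_rpow (hpos b) (hmono ha hb hab) hq)
  refine ⟨(α + 1) / (gammaDensityConst α * exp (-2)) *
    (∫⁻ σ in Ioi 0, ENNReal.ofReal (h σ ^ q * gammaDensity α σ)).toReal, by positivity,
    fun σ hσ ↦ ?_⟩
  have key := calc
    ENNReal.ofReal (h σ ^ q * (gammaDensityConst α * exp (-2) * (σ ^ (α + 1) / (α + 1))))
        ≤ ENNReal.ofReal (h σ ^ q) * ∫⁻ t in Ioc 0 σ, ENNReal.ofReal (gammaDensity α t) := by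
          rw [ENNReal.ofReal_mul (rpow_nonneg (hpos σ) q)]
          gcongr
          exact ofReal_le_setLIntegral_Ioc_gammaDensity hα hσ.1.le hσ.2
      _ ≤ ∫⁻ t in Ioi 0, ENNReal.ofReal (h t ^ q) * ENNReal.ofReal (gammaDensity α t) :=
          mul_setLIntegral_Ioc_le_of_antitoneOn hanti hσ.1
      _ = ∫⁻ t in Ioi 0, ENNReal.ofReal (h t ^ q * gammaDensity α t) := by
          simp only [ENNReal.ofReal_mul (rpow_nonneg (hpos _) q)]
  rw [ENNReal.ofReal_le_iff_le_toReal hfin] at key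
  calc h σ ^ q * σ ^ (α + 1)
      = (α + 1) / (gammaDensityConst α * exp (-2)) *
          (h σ ^ q * (gammaDensityConst α * exp (-2) * (σ ^ (α + 1) / (α + 1)))) := by
        field_simp
    _ ≤ _ := by gcongr

lemma rpow_mul_gammaDensity_le {α β a σ M : ℝ} (hα : -1 < α) (hβ : -1 < β) (hσ : 0 < σ)
    {q v : ℝ} (h : a ^ v * σ ^ (β - α) ≤ M * a ^ q) :
    a ^ v * gammaDensity β σ ≤
      gammaDensityConst β / gammaDensityConst α * M * (a ^ q * gammaDensity α σ) := by
  have := gammaDensityConst_pos hα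
  have := gammaDensityConst_pos hβ
  have hσβ : σ ^ β = σ ^ α * σ ^ (β - α) := by rw [← rpow_add hσ, add_sub_cancel]
  calc a ^ v * gammaDensity β σ
      = gammaDensityConst β * exp (-2 * σ) * σ ^ α * (a ^ v * σ ^ (β - α)) := by
        unfold gammaDensity; rw [hσβ]; ring
    _ ≤ gammaDensityConst β * exp (-2 * σ) * σ ^ α * (M * a ^ q) := by gcongr
    _ = _ := by unfold gammaDensity; field_simp

lemma exists_rpow_mul_gammaDensity_le_mul {α β q v : ℝ} {h : ℝ → ℝ} (hα : -1 < α)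
    (hβ : -1 < β) (hq : 0 < q) (hqv : q ≤ v) (heq : (α + 1) / q = (β + 1) / v)
    (hmono : AntitoneOn h (Ioi 0)) (hpos : ∀ σ, 0 ≤ h σ)
    (hfin : ∫⁻ σ in Ioi 0, ENNReal.ofReal (h σ ^ q * gammaDensity α σ) ≠ ⊤) :
    ∃ C ≥ 0, ∀ σ ∈ Ioc (0 : ℝ) 1,
      h σ ^ v * gammaDensity β σ ≤ C * (h σ ^ q * gammaDensity α σ) := by
  obtain ⟨K, hK, hbound⟩ := exists_rpow_mul_rpow_le_of_antitoneOn hα hq.le hmono hpos hfin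
  have hexp : (α + 1) * ((v - q) / q) = β - α := by
    rw [div_eq_div_iff hq.ne' (hq.trans_le hqv).ne'] at heq
    field_simp
    linarith
  have := gammaDensityConst_pos hα
  have := gammaDensityConst_pos hβ
  refine ⟨gammaDensityConst β / gammaDensityConst α * K ^ ((v - q) / q), by positivity,
    fun σ hσ ↦ rpow_mul_gammaDensity_le hα hβ hσ.1 ?_⟩
  have := rpow_mul_rpow_le_of_rpow_mul_le (hpos σ) (rpow_nonneg hσ.1.le _) hq hqv (hbound σ hσ)
  rwa [← rpow_mul hσ.1.le, hexp] at this

theorem embedding_equal_general (α β q v : ℝ) (hα : -1 < α) (hβ : -1 < β)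
    (hq : 0 < q) (hqv : q ≤ v) (heq : (α + 1) / q = (β + 1) / v)
    (h : ℝ → ℝ) (hmono : AntitoneOn h (Set.Ioi 0)) (hpos : ∀ σ, 0 ≤ h σ)
    (hfin : (∫⁻ σ in Set.Ioi (0 : ℝ),
        ENNReal.ofReal (h σ ^ q *
          ((2 ^ (α + 1) / Real.Gamma (α + 1)) * σ ^ α * Real.exp (-2 * σ)))) < ⊤) :
    (∫⁻ σ in Set.Ioi (0 : ℝ),
        ENNReal.ofReal (h σ ^ v *
          ((2 ^ (β + 1) / Real.Gamma (β + 1)) * σ ^ β * Real.exp (-2 * σ)))) < ⊤ := by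
  change ∫⁻ σ in Ioi 0, ENNReal.ofReal (h σ ^ q * gammaDensity α σ) < ⊤ at hfin
  change ∫⁻ σ in Ioi 0, ENNReal.ofReal (h σ ^ v * gammaDensity β σ) < ⊤
  obtain ⟨C, hC, hsmall⟩ :=
    exists_rpow_mul_gammaDensity_le_mul hα hβ hq hqv heq hmono hpos hfin.ne
  have hlarge : ∀ σ ∈ Ioi (1 : ℝ), h σ ^ v * gammaDensity β σ ≤ h 1 ^ v * gammaDensity β σ :=
    fun σ hσ ↦
      have hσ₀ : (0 : ℝ) < σ := one_pos.trans hσ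
      mul_le_mul_of_nonneg_right
        (rpow_le_rpow (hpos σ) (hmono (mem_Ioi.2 one_pos) hσ₀ hσ.le) (hq.le.trans hqv))
        (gammaDensity_nonneg hβ hσ₀.le)
  rw [← Ioc_union_Ioi_eq_Ioi zero_le_one]
  refine (lintegral_union_le _ _ _).trans_lt (ENNReal.add_lt_top.2 ⟨?_, ?_⟩)
  · exact (setLIntegral_ofReal_le_mul measurableSet_Ioc Ioc_subset_Ioi_self hC hsmall).trans_lt
      (ENNReal.mul_lt_top ENNReal.ofReal_lt_top hfin)
  · exact (setLIntegral_ofReal_le_mul measurableSet_Ioi (Ioi_subset_Ioi zero_le_one)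
      (rpow_nonneg (hpos 1) v) hlarge).trans_lt
      (ENNReal.mul_lt_top ENNReal.ofReal_lt_top (lintegral_gammaDensity_lt_top hβ))

/-- Sufficiency part (ii) of the embedding theorem, abstract form: if `0 < q ≤ v < ∞`,
`(α+1)/q = (β+1)/v`, and `h : (0,∞) → [0,∞)` is decreasing, satisfies
`h(σ/γ) ≤ h(σ)` for all `γ ∈ (0,1]` and `σ > 0`, and `∫_0^∞ h(σ)^q dμ_α(σ) < ∞`,
then `∫_0^∞ h(σ)^v dμ_β(σ) < ∞`. -/
theorem embedding_equal (α β q v : ℝ) (hα : -1 < α) (hβ : -1 < β)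
    (hq : 0 < q) (hqv : q ≤ v) (heq : (α + 1) / q = (β + 1) / v)
    (h : ℝ → ℝ) (hmono : AntitoneOn h (Set.Ioi 0)) (hpos : ∀ σ, 0 ≤ h σ)
    (hscale : ∀ γ ∈ Set.Ioc (0 : ℝ) 1, ∀ σ > (0 : ℝ), h (σ / γ) ≤ h σ)
    (hfin : (∫⁻ σ in Set.Ioi (0 : ℝ),
        ENNReal.ofReal (h σ ^ q *
          ((2 ^ (α + 1) / Real.Gamma (α + 1)) * σ ^ α * Real.exp (-2 * σ)))) < ⊤) :
    (∫⁻ σ in Set.Ioi (0 : ℝ),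
        ENNReal.ofReal (h σ ^ v *
          ((2 ^ (β + 1) / Real.Gamma (β + 1)) * σ ^ β * Real.exp (-2 * σ)))) < ⊤ :=
  embedding_equal_general α β q v hα hβ hq hqv heq h hmono hpos hfin
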